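/- arXiv:2203.04993 — 4 statements merged into one kernel-verified Lean document; each statement's English description precedes it below -/
import Mathlib

section
/- Let μ₂ > μ₃ ≥ 0 be real numbers and let (t_s)_{s∈ℕ} be a sequence of reals with 0 ≤ t_s ≤ 1 for all s. Define T(μ) = ∑_{s=0}^∞ e^{−μ} (μ^s/s!) t_s (the series converges absolutely). Then t₀ ≥ (μ₂ e^{μ₃} T(μ₃) − μ₃ e^{μ₂} T(μ₂)) / (μ₂ − μ₃). -/
/-- The observable quantity at laser intensity `μ`:
`T(μ) = ∑_{s=0}^∞ e^{−μ} (μ^s/s!) t_s` (Poisson average of `(t_s)`). -/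
noncomputable def decoyT (μ : ℝ) (t : ℕ → ℝ) : ℝ :=
  ∑' s : ℕ, Real.exp (-μ) * μ ^ s / (Nat.factorial s : ℝ) * t s

open Nat

/-!
Multiplying out the Poisson factors, `μ₂ e^{μ₃} T(μ₃) − μ₃ e^{μ₂} T(μ₂)` is the series
`∑ (μ₂ μ₃^s − μ₃ μ₂^s) t_s / s!`. Its `s = 0` term is `(μ₂ − μ₃) t₀`, and every later term is
`≤ 0` because `μ₂ μ₃^{s+1} = μ₂ μ₃ μ₃^s ≤ μ₂ μ₃ μ₂^s = μ₃ μ₂^{s+1}` when `0 ≤ μ₃ ≤ μ₂`.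
-/

theorem HasSum.le_apply_zero_of_succ_nonpos {f : ℕ → ℝ} {a : ℝ} (hf : HasSum f a)
    (hsucc : ∀ n, f (n + 1) ≤ 0) : a ≤ f 0 := by
  rw [← hf.tsum_eq, hf.summable.tsum_eq_zero_add]
  exact add_le_of_nonpos_right (tsum_nonpos hsucc)

theorem summable_pow_div_factorial_mul_of_abs_le {t : ℕ → ℝ} {C : ℝ} (ht : ∀ s, |t s| ≤ C)
    (μ : ℝ) : Summable fun s => μ ^ s / (s ! : ℝ) * t s := by
  refine Summable.of_norm_bounded ((Real.summable_pow_div_factorial |μ|).mul_right C) fun s => ?_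
  rw [Real.norm_eq_abs, abs_mul, abs_div, abs_pow, Nat.abs_cast]
  exact mul_le_mul_of_nonneg_left (ht s) (by positivity)

theorem hasSum_exp_mul_decoyT {μ : ℝ} {t : ℕ → ℝ}
    (hsum : Summable fun s => μ ^ s / (s ! : ℝ) * t s) :
    HasSum (fun s => μ ^ s / (s ! : ℝ) * t s) (Real.exp μ * decoyT μ t) := by
  have hdecoyT : decoyT μ t = Real.exp (-μ) * ∑' s, μ ^ s / (s ! : ℝ) * t s := by
    rw [decoyT, ← tsum_mul_left]
    congr 1 with s
    ring
  rw [hdecoyT, ← mul_assoc, ← Real.exp_add, add_neg_cancel, Real.exp_zero, one_mul]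
  exact hsum.hasSum

theorem mul_pow_succ_le_mul_pow_succ {a b : ℝ} (hb : 0 ≤ b) (hba : b ≤ a) (n : ℕ) :
    a * b ^ (n + 1) ≤ b * a ^ (n + 1) := by
  calc a * b ^ (n + 1) = a * b * b ^ n := by ring
    _ ≤ a * b * a ^ n := by gcongr; exact mul_nonneg (hb.trans hba) hb
    _ = b * a ^ (n + 1) := by ring

/-- **Decoy-state lower bound on the vacuum term `t₀`.**
For intensities `μ₂ > μ₃ ≥ 0` and per-photon-number probabilities
`0 ≤ t_s ≤ 1`, one has
`t₀ ≥ (μ₂ e^{μ₃} T(μ₃) − μ₃ e^{μ₂} T(μ₂)) / (μ₂ − μ₃)`. -/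
theorem decoy_t0_lower_bound (μ₂ μ₃ : ℝ) (h32 : μ₃ < μ₂) (h3 : 0 ≤ μ₃)
    (t : ℕ → ℝ) (ht0 : ∀ s, 0 ≤ t s) (ht1 : ∀ s, t s ≤ 1) :
    (μ₂ * Real.exp μ₃ * decoyT μ₃ t - μ₃ * Real.exp μ₂ * decoyT μ₂ t) / (μ₂ - μ₃)
      ≤ t 0 := by
  have ht : ∀ s, |t s| ≤ 1 := fun s => abs_le.2 ⟨by linarith [ht0 s], ht1 s⟩
  have hT₂ := hasSum_exp_mul_decoyT (summable_pow_div_factorial_mul_of_abs_le ht μ₂)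
  have hT₃ := hasSum_exp_mul_decoyT (summable_pow_div_factorial_mul_of_abs_le ht μ₃)
  have hcombined := (hT₃.mul_left μ₂).sub (hT₂.mul_left μ₃)
  have hle := hcombined.le_apply_zero_of_succ_nonpos fun s => by
    have hterm : μ₂ * (μ₃ ^ (s + 1) / ((s + 1)! : ℝ) * t (s + 1))
        - μ₃ * (μ₂ ^ (s + 1) / ((s + 1)! : ℝ) * t (s + 1))
        = (μ₂ * μ₃ ^ (s + 1) - μ₃ * μ₂ ^ (s + 1)) * (t (s + 1) / ((s + 1)! : ℝ)) := by ring
    rw [hterm]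
    exact mul_nonpos_of_nonpos_of_nonneg
      (sub_nonpos.2 (mul_pow_succ_le_mul_pow_succ h3 h32.le s))
      (div_nonneg (ht0 _) (by positivity))
  rw [div_le_iff₀ (sub_pos.2 h32)]
  simp only [pow_zero, Nat.factorial_zero, Nat.cast_one, div_one, one_mul] at hle
  linarith
end

section
/- Let μ₁, μ₂, μ₃ be real numbers with μ₁ > μ₂ + μ₃ and μ₂ > μ₃ ≥ 0, and let (t_s)_{s∈ℕ} be a sequence of reals with 0 ≤ t_s ≤ 1 for all s. Define T(μ) = ∑_{s=0}^∞ e^{−μ} (μ^s/s!) t_s (the series converges absolutely). Then t₁ ≥ (μ₁ / (μ₁(μ₂ − μ₃) − (μ₂² − μ₃²))) · ( e^{μ₂} T(μ₂) − e^{μ₃} T(μ₃) − ((μ₂² − μ₃²)/μ₁²) · ( e^{μ₁} T(μ₁) − t₀ ) ), where the denominator μ₁(μ₂ − μ₃) − (μ₂² − μ₃²) = (μ₂ − μ₃)(μ₁ − μ₂ − μ₃) is strictly positive. -/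
open scoped Nat

theorem pow_add_two_sub_pow_add_two_le {a b : ℝ} (hb : 0 ≤ b) (hba : b ≤ a) (n : ℕ) :
    a ^ (n + 2) - b ^ (n + 2) ≤ (a ^ 2 - b ^ 2) * (a + b) ^ n := by
  induction n with
  | zero => simp
  | succ n ih =>
    have hab : 0 ≤ a * b * (a ^ (n + 1) - b ^ (n + 1)) :=
      mul_nonneg (mul_nonneg (hb.trans hba) hb) (sub_nonneg.2 (pow_le_pow_left₀ hb hba _))
    calc a ^ (n + 1 + 2) - b ^ (n + 1 + 2)
        = (a + b) * (a ^ (n + 2) - b ^ (n + 2)) - a * b * (a ^ (n + 1) - b ^ (n + 1)) := by ring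
      _ ≤ (a + b) * ((a ^ 2 - b ^ 2) * (a + b) ^ n) := by
          linarith [mul_le_mul_of_nonneg_left ih (by linarith : 0 ≤ a + b)]
      _ = (a ^ 2 - b ^ 2) * (a + b) ^ (n + 1) := by ring

theorem summable_pow_div_factorial_mul_of_abs_le_one (μ : ℝ) {t : ℕ → ℝ}
    (ht : ∀ s, |t s| ≤ 1) : Summable fun s => μ ^ s / s ! * t s := by
  refine (Real.summable_pow_div_factorial |μ|).of_norm_bounded fun s => ?_
  rw [norm_mul, norm_div, norm_pow, Real.norm_eq_abs, Real.norm_natCast]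
  exact mul_le_of_le_one_right (by positivity) (by simpa using ht s)

theorem exp_mul_decoyT (μ : ℝ) (t : ℕ → ℝ) :
    Real.exp μ * decoyT μ t = ∑' s, μ ^ s / s ! * t s := by
  rw [decoyT, ← tsum_mul_left]
  congr 1 with s
  have h : Real.exp μ * Real.exp (-μ) = 1 := by rw [← Real.exp_add, add_neg_cancel, Real.exp_zero]
  linear_combination (μ ^ s / s ! * t s) * h

noncomputable def multiPhotonPart (μ : ℝ) (t : ℕ → ℝ) : ℝ :=
  ∑' s, μ ^ (s + 2) / (s + 2)! * t (s + 2)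

theorem exp_mul_decoyT_eq {t : ℕ → ℝ} (ht : ∀ s, |t s| ≤ 1) (μ : ℝ) :
    Real.exp μ * decoyT μ t = t 0 + μ * t 1 + multiPhotonPart μ t := by
  rw [exp_mul_decoyT, multiPhotonPart,
    ← (summable_pow_div_factorial_mul_of_abs_le_one μ ht).sum_add_tsum_nat_add 2]
  simp [Finset.sum_range_succ]

theorem sq_mul_multiPhotonPart_sub_le {a b c : ℝ} (hb : 0 ≤ b) (hba : b ≤ a) (habc : a + b ≤ c)
    {t : ℕ → ℝ} (ht0 : ∀ s, 0 ≤ t s) (ht1 : ∀ s, t s ≤ 1) :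
    c ^ 2 * (multiPhotonPart a t - multiPhotonPart b t) ≤
      (a ^ 2 - b ^ 2) * multiPhotonPart c t := by
  have ht : ∀ s, |t s| ≤ 1 := fun s => abs_le.2 ⟨by linarith [ht0 s], ht1 s⟩
  have hsum : ∀ μ, Summable fun s => μ ^ (s + 2) / (s + 2)! * t (s + 2) := fun μ =>
    (summable_nat_add_iff 2).2 (summable_pow_div_factorial_mul_of_abs_le_one μ ht)
  rw [multiPhotonPart, multiPhotonPart, multiPhotonPart, ← (hsum a).tsum_sub (hsum b),
    ← tsum_mul_left, ← tsum_mul_left]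
  refine (((hsum a).sub (hsum b)).mul_left _).tsum_le_tsum (fun s => ?_) ((hsum c).mul_left _)
  have hpow : a ^ (s + 2) - b ^ (s + 2) ≤ (a ^ 2 - b ^ 2) * c ^ s :=
    (pow_add_two_sub_pow_add_two_le hb hba s).trans <| mul_le_mul_of_nonneg_left
      (pow_le_pow_left₀ (by linarith) habc s) (sub_nonneg.2 (pow_le_pow_left₀ hb hba 2))
  have hw : 0 ≤ c ^ 2 * t (s + 2) / (s + 2)! := by have := ht0 (s + 2); positivity
  calc c ^ 2 * (a ^ (s + 2) / (s + 2)! * t (s + 2) - b ^ (s + 2) / (s + 2)! * t (s + 2))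
      = (a ^ (s + 2) - b ^ (s + 2)) * (c ^ 2 * t (s + 2) / (s + 2)!) := by ring
    _ ≤ (a ^ 2 - b ^ 2) * c ^ s * (c ^ 2 * t (s + 2) / (s + 2)!) :=
        mul_le_mul_of_nonneg_right hpow hw
    _ = (a ^ 2 - b ^ 2) * (c ^ (s + 2) / (s + 2)! * t (s + 2)) := by ring

/-- **Decoy-state lower bound on the single-photon term `t₁`.**
For intensities `μ₁ > μ₂ + μ₃` and `μ₂ > μ₃ ≥ 0`, and per-photon-number
probabilities `0 ≤ t_s ≤ 1`, the denominator
`μ₁(μ₂ − μ₃) − (μ₂² − μ₃²) = (μ₂ − μ₃)(μ₁ − μ₂ − μ₃)` is strictly positive and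
`t₁ ≥ (μ₁/(μ₁(μ₂ − μ₃) − (μ₂² − μ₃²))) · (e^{μ₂}T(μ₂) − e^{μ₃}T(μ₃)
      − ((μ₂² − μ₃²)/μ₁²)·(e^{μ₁}T(μ₁) − t₀))`. -/
theorem decoy_t1_lower_bound (μ₁ μ₂ μ₃ : ℝ) (h1 : μ₂ + μ₃ < μ₁)
    (h32 : μ₃ < μ₂) (h3 : 0 ≤ μ₃)
    (t : ℕ → ℝ) (ht0 : ∀ s, 0 ≤ t s) (ht1 : ∀ s, t s ≤ 1) :
    0 < μ₁ * (μ₂ - μ₃) - (μ₂ ^ 2 - μ₃ ^ 2) ∧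
    μ₁ / (μ₁ * (μ₂ - μ₃) - (μ₂ ^ 2 - μ₃ ^ 2)) *
        (Real.exp μ₂ * decoyT μ₂ t - Real.exp μ₃ * decoyT μ₃ t
          - (μ₂ ^ 2 - μ₃ ^ 2) / μ₁ ^ 2 * (Real.exp μ₁ * decoyT μ₁ t - t 0))
      ≤ t 1 := by
  have hμ₁ : 0 < μ₁ := by linarith
  have hD : 0 < μ₁ * (μ₂ - μ₃) - (μ₂ ^ 2 - μ₃ ^ 2) := by
    rw [show μ₁ * (μ₂ - μ₃) - (μ₂ ^ 2 - μ₃ ^ 2) = (μ₂ - μ₃) * (μ₁ - μ₂ - μ₃) by ring]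
    exact mul_pos (by linarith) (by linarith)
  refine ⟨hD, ?_⟩
  have ht : ∀ s, |t s| ≤ 1 := fun s => abs_le.2 ⟨by linarith [ht0 s], ht1 s⟩
  have hM := sq_mul_multiPhotonPart_sub_le h3 h32.le h1.le ht0 ht1
  simp only [exp_mul_decoyT_eq ht]
  rw [div_mul_eq_mul_div, div_le_iff₀ hD]
  field_simp
  linarith
end

section
/- Let a, b, c be real numbers with a ≥ b ≥ 0 and c ≥ a + b, and let s ≥ 2 be a natural number. Then a^s − b^s ≤ (a² − b²) · c^{s−2}. -/
theorem pow_add_two_sub_pow_add_two_le_s8 {R : Type*} [CommRing R] [PartialOrder R] [IsOrderedRing R]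
    {a b c : R} (hab : b ≤ a) (hb : 0 ≤ b) (hc : a + b ≤ c)
    (k : ℕ) : a ^ (k + 2) - b ^ (k + 2) ≤ (a ^ 2 - b ^ 2) * c ^ k := by
  have ha : 0 ≤ a := hb.trans hab
  have hab' : 0 ≤ a - b := sub_nonneg.2 hab
  have hsq : 0 ≤ a ^ 2 - b ^ 2 := by
    rw [sq_sub_sq]
    exact mul_nonneg (add_nonneg ha hb) hab'
  induction k with
  | zero => simp
  | succ k ih =>
    have hbc : b ≤ c := (le_add_of_nonneg_left ha).trans hc
    have hb_succ : b ^ (k + 1) ≤ (a + b) * c ^ k := by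
      rw [pow_succ']
      exact mul_le_mul (le_add_of_nonneg_left ha) (pow_le_pow_left₀ hb hbc k)
        (pow_nonneg hb k) (add_nonneg ha hb)
    calc a ^ (k + 1 + 2) - b ^ (k + 1 + 2)
        = a * (a ^ (k + 2) - b ^ (k + 2)) + (a - b) * b * b ^ (k + 1) := by ring
      _ ≤ a * ((a ^ 2 - b ^ 2) * c ^ k) + (a - b) * b * ((a + b) * c ^ k) := by gcongr
      _ = (a + b) * ((a ^ 2 - b ^ 2) * c ^ k) := by ring
      _ ≤ c * ((a ^ 2 - b ^ 2) * c ^ k) := by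
          gcongr
          exact mul_nonneg hsq (pow_nonneg (hb.trans hbc) k)
      _ = (a ^ 2 - b ^ 2) * c ^ (k + 1) := by ring

/-- **Key algebraic inequality of the decoy-state analysis.**
For reals `a ≥ b ≥ 0`, `c ≥ a + b`, and a natural number `s ≥ 2`,
`a^s − b^s ≤ (a² − b²)·c^{s−2}`. -/
theorem decoy_pow_inequality (a b c : ℝ) (hab : b ≤ a) (hb : 0 ≤ b)
    (hc : a + b ≤ c) (s : ℕ) (hs : 2 ≤ s) :
    a ^ s - b ^ s ≤ (a ^ 2 - b ^ 2) * c ^ (s - 2) := by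
  obtain ⟨k, rfl⟩ := Nat.exists_eq_add_of_le' hs
  simpa using pow_add_two_sub_pow_add_two_le_s8 hab hb hc k
end

section
/- Let 𝒮, ℰ, 𝒟, 𝒦 be finite nonempty sets and Ext : 𝒮 × 𝒟 → 𝒦 a function. For a nonnegative function p : 𝒮 × ℰ → ℝ with ∑_{s,e} p(s,e) ≤ 1 (a subnormalized distribution), define H_min(S|E)_p = −log₂( ∑_{e∈ℰ} max_{s∈𝒮} p(s,e) ) and the extractor error Δ(p) = ∑_{κ∈𝒦} ∑_{y∈𝒟} ∑_{e∈ℰ} | (1/|𝒟|)·∑_{s : Ext(s,y)=κ} p(s,e) − (1/(|𝒦|·|𝒟|))·∑_{s∈𝒮} p(s,e) |. Suppose Ext is a strong (k, ε_Ext)-extractor against classical side information: Δ(q) ≤ ε_Ext for every subnormalized distribution q on 𝒮 × ℰ with H_min(S|E)_q ≥ k. Then for every subnormalized distribution p on 𝒮 × ℰ for which there exists a subnormalized distribution q with ∑_{s,e} |p(s,e) − q(s,e)| ≤ 2ε and H_min(S|E)_q ≥ k, one has Δ(p) ≤ ε_Ext + 4ε. -/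
/-- The classical conditional min-entropy
`H_min(S|E)_p = −log₂(∑_e max_s p(s,e))` of a subnormalized distribution `p`
on `𝒮 × ℰ`. -/
noncomputable def HminCl {S E : Type*} [Fintype S] [Fintype E] [Nonempty S]
    (p : S → E → ℝ) : ℝ :=
  -Real.logb 2 (∑ e, Finset.univ.sup' Finset.univ_nonempty fun s => p s e)

/-- The extractor error
`Δ(p) = ∑_{κ,y,e} |(1/|𝒟|)·∑_{s : Ext(s,y)=κ} p(s,e) − (1/(|𝒦||𝒟|))·∑_s p(s,e)|`,
the ℓ¹ distance of `(Ext(S, seed), E, seed)` from uniform on `𝒦` times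
`(E, seed)`. -/
noncomputable def extErr {S E D K : Type*} [Fintype S] [Fintype E] [Fintype D]
    [Fintype K] [DecidableEq K] (Ext : S × D → K) (p : S → E → ℝ) : ℝ :=
  ∑ κ : K, ∑ y : D, ∑ e : E,
    |(1 / (Fintype.card D : ℝ)) *
        ∑ s ∈ Finset.univ.filter (fun s => Ext (s, y) = κ), p s e
      - (1 / ((Fintype.card K : ℝ) * (Fintype.card D : ℝ))) * ∑ s, p s e|

/-! The extractor error is a sum of absolute values of linear functionals of `p`, hence it is
subadditive and bounded by twice the ℓ¹ norm of `p`: a sample lands in exactly one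
`(Ext(s, y) = κ)`-fibre, and the uniform term spreads the mass over `|𝒦|·|𝒟|` cells with weight
`1/(|𝒦||𝒟|)`. So `Δ(p) ≤ Δ(q) + 2‖p − q‖₁ ≤ ε_Ext + 2·2ε` for the smoothing witness `q`. -/

open Finset

section

variable {S E D K : Type*} [Fintype S] [Fintype E] [Fintype D] [Fintype K] [DecidableEq K]

theorem extErr_add_le (Ext : S × D → K) (p q : S → E → ℝ) :
    extErr Ext (p + q) ≤ extErr Ext p + extErr Ext q := by
  unfold extErr
  simp only [← sum_add_distrib]
  gcongr with κ _ y _ e _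
  refine le_of_eq_of_le (congrArg abs ?_) (abs_add_le _ _)
  simp only [Pi.add_apply, sum_add_distrib]
  ring

theorem extErr_le_two_mul_sum_abs (Ext : S × D → K) (p : S → E → ℝ) :
    extErr Ext p ≤ 2 * ∑ s, ∑ e, |p s e| := by
  set cD := (Fintype.card D : ℝ)
  set cK := (Fintype.card K : ℝ)
  set T := ∑ s, ∑ e, |p s e|
  have hswap : ∑ e, ∑ s, |p s e| = T := sum_comm
  have hfibres : ∑ κ : K, ∑ y : D, ∑ e : E,
      1 / cD * ∑ s ∈ univ.filter (fun s => Ext (s, y) = κ), |p s e| = cD * (1 / cD) * T := by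
    rw [sum_comm]
    simp only [← mul_sum, sum_comm (γ := K), sum_fiberwise, hswap]
    simp only [sum_const, card_univ, nsmul_eq_mul, cD]
    ring
  have huniform : ∑ κ : K, ∑ y : D, ∑ e : E,
      1 / (cK * cD) * ∑ s, |p s e| = (cK * cD) * (1 / (cK * cD)) * T := by
    simp only [← mul_sum, hswap]
    simp only [sum_const, card_univ, nsmul_eq_mul, cK, cD]
    ring
  calc extErr Ext p
      ≤ ∑ κ : K, ∑ y : D, ∑ e : E,
          (1 / cD * ∑ s ∈ univ.filter (fun s => Ext (s, y) = κ), |p s e|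
            + 1 / (cK * cD) * ∑ s, |p s e|) := by
        unfold extErr
        gcongr with κ _ y _ e _
        refine (abs_sub _ _).trans (add_le_add ?_ ?_) <;>
          rw [abs_mul, abs_of_nonneg (by positivity)] <;>
          gcongr <;> exact abs_sum_le_sum_abs _ _
    _ = cD * (1 / cD) * T + (cK * cD) * (1 / (cK * cD)) * T := by
        simp only [sum_add_distrib, hfibres, huniform]
    -- `n * (1 / n) ≤ 1` also holds at `n = 0`, so empty `D` or `K` needs no separate case.
    _ ≤ 1 * T + 1 * T := by
        have hT : 0 ≤ T := by positivity
        simp only [one_div]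
        gcongr <;> exact mul_inv_le_one
    _ = 2 * T := by ring

theorem extErr_le_add_two_mul_sum_abs_sub (Ext : S × D → K) (p q : S → E → ℝ) :
    extErr Ext p ≤ extErr Ext q + 2 * ∑ s, ∑ e, |p s e - q s e| :=
  calc extErr Ext p = extErr Ext (q + (p - q)) := by rw [add_sub_cancel]
    _ ≤ extErr Ext q + extErr Ext (p - q) := extErr_add_le Ext q (p - q)
    _ ≤ extErr Ext q + 2 * ∑ s, ∑ e, |p s e - q s e| := by
        gcongr
        exact extErr_le_two_mul_sum_abs Ext (p - q)

end

theorem smoothed_extractor_bound_general {S E D K : Type*} [Fintype S] [Fintype E]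
    [Fintype D] [Fintype K] [Nonempty S]
    [DecidableEq K]
    (Ext : S × D → K) (k εExt ε : ℝ)
    (hstrong : ∀ q : S → E → ℝ, (∀ s e, 0 ≤ q s e) → (∑ s, ∑ e, q s e) ≤ 1 →
      k ≤ HminCl q → extErr Ext q ≤ εExt)
    (p : S → E → ℝ)
    (hclose : ∃ q : S → E → ℝ, (∀ s e, 0 ≤ q s e) ∧ (∑ s, ∑ e, q s e) ≤ 1 ∧
      (∑ s, ∑ e, |p s e - q s e|) ≤ 2 * ε ∧ k ≤ HminCl q) :
    extErr Ext p ≤ εExt + 4 * ε := by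
  obtain ⟨q, hq0, hq1, hpq, hqk⟩ := hclose
  have hq : extErr Ext q ≤ εExt := hstrong q hq0 hq1 hqk
  linarith [extErr_le_add_two_mul_sum_abs_sub Ext p q]

/-- **Smoothed strong extractor bound (classical side information).**
If `Ext` is a strong `(k, ε_Ext)`-extractor (error at most `ε_Ext` on every
subnormalized distribution with min-entropy at least `k`), then its error on
any subnormalized distribution `p` that is `2ε`-close in ℓ¹ distance to some
subnormalized distribution with min-entropy at least `k` is at most
`ε_Ext + 4ε`. -/
theorem smoothed_extractor_bound {S E D K : Type*} [Fintype S] [Fintype E]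
    [Fintype D] [Fintype K] [Nonempty S] [Nonempty E] [Nonempty D] [Nonempty K]
    [DecidableEq K]
    (Ext : S × D → K) (k εExt ε : ℝ)
    (hstrong : ∀ q : S → E → ℝ, (∀ s e, 0 ≤ q s e) → (∑ s, ∑ e, q s e) ≤ 1 →
      k ≤ HminCl q → extErr Ext q ≤ εExt)
    (p : S → E → ℝ) (hp0 : ∀ s e, 0 ≤ p s e) (hp1 : (∑ s, ∑ e, p s e) ≤ 1)
    (hclose : ∃ q : S → E → ℝ, (∀ s e, 0 ≤ q s e) ∧ (∑ s, ∑ e, q s e) ≤ 1 ∧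
      (∑ s, ∑ e, |p s e - q s e|) ≤ 2 * ε ∧ k ≤ HminCl q) :
    extErr Ext p ≤ εExt + 4 * ε :=
  smoothed_extractor_bound_general Ext k εExt ε hstrong p hclose
end
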